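/- Let J be a positive integer, j ∈ {1,…,J}, ε₀ > 0, λ > 0 and C > 0. For each r ∈ (0,1), let Z^{(r)} = (Z_1^{(r)},…,Z_J^{(r)}) be a random vector with nonnegative coordinates and A_r a measurable event on a probability space, and let μ^{(r)} > 0 be reals with ℙ(A_r) = r^j / μ^{(r)} and μ^{(r)} → λ as r → 0⁺. Suppose sup_{r ∈ (0,1)} 𝔼[(r^{k} Z_k^{(r)})^{j+ε₀}] < ∞ for each k < j. Let θ, θ′ : (0,1) → ℝ^J with θ_k(r) ≤ 0 and θ′_k(r) ≤ 0 for all k and r, θ_k(r) = θ′_k(r) for all k ≥ j, and |θ_k(r) − θ′_k(r)| ≤ C r^{j} for all k < j and r. Then 𝔼[exp(Σ_{k=1}^J θ_k(r) Z_k^{(r)}) · 1_{A_r}]/ℙ(A_r) − 𝔼[exp(Σ_{k=1}^J θ′_k(r) Z_k^{(r)}) · 1_{A_r}]/ℙ(A_r) → 0 as r → 0⁺. -/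

import Mathlib

open MeasureTheory Filter Topology Finset

lemma exp_abs_sub_le {a b : ℝ} (ha : a ≤ 0) (hb : b ≤ 0) :
    |Real.exp a - Real.exp b| ≤ |a - b| := by
  have key : ∀ x y : ℝ, x ≤ 0 → y ≤ x → Real.exp x - Real.exp y ≤ x - y := by
    intro x y hx hxy
    have h1 := Real.add_one_le_exp (y - x)
    have h2 : Real.exp y = Real.exp x * Real.exp (y - x) := by rw [← Real.exp_add]; ring_nf
    have h3 : Real.exp x ≤ 1 := Real.exp_le_one_iff.mpr hx
    nlinarith [Real.exp_pos x]
  rcases le_total b a with h | h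
  · rw [abs_of_nonneg (by simpa using Real.exp_le_exp.mpr h), abs_of_nonneg (by linarith)]
    exact key a b ha h
  · rw [abs_of_nonpos (by simpa using Real.exp_le_exp.mpr h), abs_of_nonpos (by linarith)]
    have := key b a hb h; linarith

lemma trunc_bound {r α p z : ℝ} (hr0 : 0 < r) (hp : 1 ≤ p) (hz : 0 ≤ z) :
    z ≤ r ^ (-α) + z ^ p * r ^ (α * (p - 1)) := by
  have hM : 0 < r ^ (-α) := Real.rpow_pos_of_pos hr0 _
  have hE : 0 < r ^ (α * (p - 1)) := Real.rpow_pos_of_pos hr0 _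
  by_cases hzM : z ≤ r ^ (-α)
  · have : 0 ≤ z ^ p * r ^ (α * (p - 1)) :=
      mul_nonneg (Real.rpow_nonneg hz _) hE.le
    linarith
  · push_neg at hzM
    have hz0 : 0 < z := lt_trans hM hzM
    have hME : (r ^ (-α)) ^ (p - 1) * r ^ (α * (p - 1)) = 1 := by
      rw [← Real.rpow_mul hr0.le, ← Real.rpow_add hr0]
      rw [show -α * (p - 1) + α * (p - 1) = 0 by ring, Real.rpow_zero]
    have h2 : (r ^ (-α)) ^ (p - 1) ≤ z ^ (p - 1) :=
      Real.rpow_le_rpow hM.le hzM.le (by linarith)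
    have h3 : z * z ^ (p - 1) = z ^ p := by
      rw [← Real.rpow_one_add' hz0.le (by intro h; simp at h; linarith)]
      ring_nf
    have h4 : z * ((r ^ (-α)) ^ (p - 1) * r ^ (α * (p - 1))) ≤
        z ^ p * r ^ (α * (p - 1)) := by
      rw [← mul_assoc, ← h3]
      exact mul_le_mul_of_nonneg_right
        (mul_le_mul_of_nonneg_left h2 hz0.le) hE.le
    rw [hME, mul_one] at h4
    linarith

/-- Conditional version of the transform state-space collapse: with
`ℙ(A_r) = r^j/μ^{(r)}`, `μ^{(r)} → λ > 0`, uniformly bounded `(j+ε₀)`-th moments of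
`r^k Z_k^{(r)}` for `k < j`, and nonpositive exponents `θ, θ'` agreeing on coordinates
`≥ j` with `|θ_k(r) - θ'_k(r)| ≤ C r^j` for `k < j`, the difference of the conditional
expectations of `exp⟨θ(r),Z⟩` and `exp⟨θ'(r),Z⟩` given `A_r` tends to `0`.
(Station `k ∈ {1,…,J}` corresponds to `k : Fin J`, with `r^k` rendered as `r^(k+1)`.) -/
theorem stmt13 (J : ℕ) (hJ : 0 < J) (j : Fin J) (ε₀ lam C : ℝ)
    (hε₀ : 0 < ε₀) (hlam : 0 < lam) (hC : 0 < C)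
    {Ω : ℝ → Type*} [∀ r, MeasurableSpace (Ω r)]
    (μ : ∀ r : ℝ, Measure (Ω r)) (hprob : ∀ r, IsProbabilityMeasure (μ r))
    (Z : ∀ r : ℝ, Ω r → Fin J → ℝ) (hZmeas : ∀ r, Measurable (Z r))
    (hZ0 : ∀ r ω k, 0 ≤ Z r ω k)
    (A : ∀ r : ℝ, Set (Ω r)) (hA : ∀ r, MeasurableSet (A r))
    (m : ℝ → ℝ) (hm : ∀ r ∈ Set.Ioo (0 : ℝ) 1, 0 < m r)
    (hPA : ∀ r ∈ Set.Ioo (0 : ℝ) 1, μ r (A r) = ENNReal.ofReal (r ^ ((j : ℕ) + 1) / m r))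
    (hmlim : Tendsto m (𝓝[>] 0) (𝓝 lam))
    (hint : ∀ k : Fin J, k < j → ∀ r ∈ Set.Ioo (0 : ℝ) 1,
      Integrable (fun ω => (r ^ ((k : ℕ) + 1) * Z r ω k) ^ (((j : ℕ) + 1 : ℝ) + ε₀)) (μ r))
    (D : Fin J → ℝ)
    (hsup : ∀ k : Fin J, k < j → ∀ r ∈ Set.Ioo (0 : ℝ) 1,
      ∫ ω, (r ^ ((k : ℕ) + 1) * Z r ω k) ^ (((j : ℕ) + 1 : ℝ) + ε₀) ∂(μ r) ≤ D k)
    (θ θ' : ℝ → Fin J → ℝ)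
    (hθ : ∀ r k, θ r k ≤ 0) (hθ' : ∀ r k, θ' r k ≤ 0)
    (heq : ∀ r, ∀ k : Fin J, j ≤ k → θ r k = θ' r k)
    (hdiff : ∀ r ∈ Set.Ioo (0 : ℝ) 1, ∀ k : Fin J, k < j →
      |θ r k - θ' r k| ≤ C * r ^ ((j : ℕ) + 1)) :
    Tendsto (fun r : ℝ =>
        (∫ ω in A r, Real.exp (∑ k, θ r k * Z r ω k) ∂(μ r)) / (μ r (A r)).toReal -
          (∫ ω in A r, Real.exp (∑ k, θ' r k * Z r ω k) ∂(μ r)) / (μ r (A r)).toReal)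
      (𝓝[>] 0) (𝓝 0) := by
  set jn : ℕ := (j : ℕ) with hjn
  set jR : ℝ := (jn : ℝ) with hjR
  have hjR0 : (0:ℝ) ≤ jR := Nat.cast_nonneg _
  set p : ℝ := ((jn : ℝ) + 1) + ε₀ with hpdef
  have hp1 : 1 < p := by rw [hpdef]; linarith
  have hpm1 : 0 < p - 1 := by linarith
  have hkey : jR * p < (jR + 1) * (p - 1) := by rw [hpdef]; nlinarith
  have hmid : jR * p / (p - 1) < jR + 1 := (div_lt_iff₀ hpm1).mpr hkey
  set α : ℝ := (jR * p / (p - 1) + (jR + 1)) / 2 with hαdef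
  have hα1 : jR * p / (p - 1) < α := by rw [hαdef]; linarith
  have hα2 : α < jR + 1 := by rw [hαdef]; linarith
  set β : ℝ := jR + 1 - α with hβdef
  have hβ : 0 < β := by rw [hβdef]; linarith
  set γ : ℝ := α * (p - 1) - jR * p with hγdef
  have hγ : 0 < γ := by
    have := (div_lt_iff₀ hpm1).mp hα1
    rw [hγdef]; linarith
  set filt : Finset (Fin J) := Finset.univ.filter (fun k => k < j) with hfilt
  set B : ℝ → ℝ := fun r => ∑ k ∈ filt, (C * r ^ β + C * D k * (m r * r ^ γ)) with hBdef
  -- limit of the bound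
  have h0 : ∀ e : ℝ, 0 < e → Tendsto (fun r : ℝ => r ^ e) (𝓝[>] 0) (𝓝 0) := by
    intro e he
    have := (Real.continuousAt_rpow_const 0 e (Or.inr he.le)).tendsto
    rw [Real.zero_rpow he.ne'] at this
    exact tendsto_nhdsWithin_of_tendsto_nhds this
  have hB : Tendsto B (𝓝[>] 0) (𝓝 0) := by
    have hB0 : Tendsto B (𝓝[>] 0)
        (𝓝 (∑ k ∈ filt, (C * 0 + C * D k * (lam * 0)))) :=
      tendsto_finset_sum _ fun k _ =>
        (tendsto_const_nhds.mul (h0 β hβ)).add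
          (tendsto_const_nhds.mul (hmlim.mul (h0 γ hγ)))
    simpa using hB0
  refine squeeze_zero_norm' ?_ hB
  filter_upwards [Ioo_mem_nhdsGT_of_mem ⟨le_refl (0:ℝ), one_pos⟩] with r hr
  obtain ⟨hr0, hr1⟩ := hr
  beta_reduce
  haveI := hprob r
  have hmr := hm r ⟨hr0, hr1⟩
  set PA : ℝ := (μ r (A r)).toReal with hPAdef
  have hPAeq : PA = r ^ (jn + 1) / m r := by
    rw [hPAdef, hPA r ⟨hr0, hr1⟩, ENNReal.toReal_ofReal]
    positivity
  have hPApos : 0 < PA := by rw [hPAeq]; positivity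
  set M : ℝ := r ^ (-α) with hMdef
  set E : ℝ := r ^ (α * (p - 1)) with hEdef
  have hM : 0 < M := Real.rpow_pos_of_pos hr0 _
  have hE : 0 < E := Real.rpow_pos_of_pos hr0 _
  set f1 : Ω r → ℝ := fun ω => Real.exp (∑ k, θ r k * Z r ω k) with hf1def
  set f2 : Ω r → ℝ := fun ω => Real.exp (∑ k, θ' r k * Z r ω k) with hf2def
  have hZk : ∀ k : Fin J, Measurable fun ω => Z r ω k := fun k =>
    (measurable_pi_apply k).comp (hZmeas r)
  have hS1 : ∀ ω, (∑ k, θ r k * Z r ω k) ≤ 0 := fun ω =>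
    Finset.sum_nonpos fun k _ => mul_nonpos_of_nonpos_of_nonneg (hθ r k) (hZ0 r ω k)
  have hS2 : ∀ ω, (∑ k, θ' r k * Z r ω k) ≤ 0 := fun ω =>
    Finset.sum_nonpos fun k _ => mul_nonpos_of_nonpos_of_nonneg (hθ' r k) (hZ0 r ω k)
  have hexpint : ∀ (g : Fin J → ℝ), (∀ ω, (∑ k, g k * Z r ω k) ≤ 0) →
      Integrable (fun ω => Real.exp (∑ k, g k * Z r ω k)) ((μ r).restrict (A r)) := by
    intro g hg
    refine Integrable.mono' (integrable_const 1)
      ((Real.measurable_exp.comp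
        (Finset.measurable_sum Finset.univ fun k _ => (hZk k).const_mul (g k))).aestronglyMeasurable)
      (ae_of_all _ fun ω => ?_)
    rw [Real.norm_eq_abs, abs_of_pos (Real.exp_pos _)]
    exact Real.exp_le_one_iff.mpr (hg ω)
  have hf1int : Integrable f1 ((μ r).restrict (A r)) := hexpint _ hS1
  have hf2int : Integrable f2 ((μ r).restrict (A r)) := hexpint _ hS2
  -- integrability of Z^p
  have hZp : ∀ k : Fin J, k < j → Integrable (fun ω => (Z r ω k) ^ p) (μ r) := by
    intro k hk
    have h1 := hint k hk r ⟨hr0, hr1⟩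
    have hc : (0:ℝ) < (r ^ ((k : ℕ) + 1)) ^ p :=
      Real.rpow_pos_of_pos (by positivity) _
    refine (h1.const_mul ((r ^ ((k : ℕ) + 1)) ^ p)⁻¹).congr (ae_of_all _ fun ω => ?_)
    show ((r ^ ((k : ℕ) + 1)) ^ p)⁻¹ * (r ^ ((k : ℕ) + 1) * Z r ω k) ^ p = (Z r ω k) ^ p
    rw [Real.mul_rpow (by positivity) (hZ0 r ω k)]
    field_simp
  -- pointwise bound on Z
  have hZbd : ∀ ω (k : Fin J), Z r ω k ≤ M + (Z r ω k) ^ p * E :=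
    fun ω k => trunc_bound hr0 hp1.le (hZ0 r ω k)
  -- dominating function
  set h : Ω r → ℝ := fun ω =>
    ∑ k ∈ filt, C * r ^ (jn + 1) * (M + (Z r ω k) ^ p * E) with hhdef
  have hsummand : ∀ k ∈ filt, Integrable
      (fun ω => C * r ^ (jn + 1) * (M + (Z r ω k) ^ p * E)) ((μ r).restrict (A r)) := by
    intro k hk
    have hk' : k < j := by simpa [hfilt] using hk
    exact ((integrable_const M).add
      (((hZp k hk').restrict (s := A r)).mul_const E)).const_mul _
  have hhint : Integrable h ((μ r).restrict (A r)) := integrable_finset_sum _ hsummand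
  -- pointwise bound
  have hpt : ∀ ω, ‖f1 ω - f2 ω‖ ≤ h ω := by
    intro ω
    have e1 : (∑ k, θ r k * Z r ω k) - (∑ k, θ' r k * Z r ω k) =
        ∑ k ∈ filt, (θ r k - θ' r k) * Z r ω k := by
      symm
      calc ∑ k ∈ filt, (θ r k - θ' r k) * Z r ω k
          = ∑ k, (θ r k - θ' r k) * Z r ω k :=
            Finset.sum_subset (Finset.filter_subset _ _) (fun x _ hx => by
              have : j ≤ x := le_of_not_gt (by simpa [hfilt] using hx)
              rw [heq r x this]; ring)
        _ = (∑ k, θ r k * Z r ω k) - (∑ k, θ' r k * Z r ω k) := by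
            rw [← Finset.sum_sub_distrib]
            exact Finset.sum_congr rfl fun k _ => by ring
    calc ‖f1 ω - f2 ω‖ = |Real.exp (∑ k, θ r k * Z r ω k) -
          Real.exp (∑ k, θ' r k * Z r ω k)| := by
            rw [hf1def, hf2def, Real.norm_eq_abs]
      _ ≤ |(∑ k, θ r k * Z r ω k) - (∑ k, θ' r k * Z r ω k)| :=
          exp_abs_sub_le (hS1 ω) (hS2 ω)
      _ = |∑ k ∈ filt, (θ r k - θ' r k) * Z r ω k| := by rw [e1]
      _ ≤ ∑ k ∈ filt, |(θ r k - θ' r k) * Z r ω k| := Finset.abs_sum_le_sum_abs _ _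
      _ ≤ h ω := by
          refine Finset.sum_le_sum fun k hk => ?_
          have hk' : k < j := by simpa [hfilt] using hk
          rw [abs_mul, abs_of_nonneg (hZ0 r ω k)]
          calc |θ r k - θ' r k| * Z r ω k
              ≤ (C * r ^ (jn + 1)) * Z r ω k :=
                mul_le_mul_of_nonneg_right (hdiff r ⟨hr0, hr1⟩ k hk') (hZ0 r ω k)
            _ ≤ C * r ^ (jn + 1) * (M + (Z r ω k) ^ p * E) :=
                mul_le_mul_of_nonneg_left (hZbd ω k) (by positivity)
  -- the integral bound
  have hnorm : ‖(∫ ω in A r, f1 ω ∂(μ r)) - (∫ ω in A r, f2 ω ∂(μ r))‖ ≤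
      ∫ ω in A r, h ω ∂(μ r) := by
    rw [← integral_sub hf1int hf2int]
    exact norm_integral_le_of_norm_le hhint (ae_of_all _ hpt)
  -- computing the integral of h
  have hIh : ∫ ω in A r, h ω ∂(μ r) =
      ∑ k ∈ filt, C * r ^ (jn + 1) * (M * PA + (∫ ω in A r, (Z r ω k) ^ p ∂(μ r)) * E) := by
    rw [hhdef, integral_finset_sum _ hsummand]
    refine Finset.sum_congr rfl fun k hk => ?_
    have hk' : k < j := by simpa [hfilt] using hk
    rw [integral_const_mul, integral_add (integrable_const M)
      (((hZp k hk').restrict (s := A r)).mul_const E), integral_const,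
      integral_mul_const, measureReal_restrict_apply_univ, measureReal_def, smul_eq_mul, mul_comm _ M]
  -- bounding the Z^p set integrals
  have hIbd : ∀ k : Fin J, k < j → ∫ ω in A r, (Z r ω k) ^ p ∂(μ r) ≤
      D k * r ^ (-(((k : ℕ) : ℝ) + 1) * p) := by
    intro k hk
    have hset : ∫ ω in A r, (Z r ω k) ^ p ∂(μ r) ≤ ∫ ω, (Z r ω k) ^ p ∂(μ r) :=
      setIntegral_le_integral (hZp k hk) (ae_of_all _ fun ω => Real.rpow_nonneg (hZ0 r ω k) _)
    have hfull : r ^ ((((k : ℕ) : ℝ) + 1) * p) * ∫ ω, (Z r ω k) ^ p ∂(μ r) ≤ D k := by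
      have e : ∀ ω, (r ^ ((k : ℕ) + 1) * Z r ω k) ^ p =
          r ^ ((((k : ℕ) : ℝ) + 1) * p) * (Z r ω k) ^ p := fun ω => by
        rw [Real.mul_rpow (by positivity) (hZ0 r ω k), ← Real.rpow_natCast r ((k : ℕ) + 1),
          ← Real.rpow_mul hr0.le]
        push_cast; ring_nf
      have h2 := hsup k hk r ⟨hr0, hr1⟩
      calc r ^ ((((k : ℕ) : ℝ) + 1) * p) * ∫ ω, (Z r ω k) ^ p ∂(μ r)
          = ∫ ω, (r ^ ((k : ℕ) + 1) * Z r ω k) ^ p ∂(μ r) := by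
            rw [← integral_const_mul]; exact (integral_congr_ae (ae_of_all _ e)).symm
        _ ≤ D k := h2
    have hrp : (0:ℝ) < r ^ ((((k : ℕ) : ℝ) + 1) * p) := Real.rpow_pos_of_pos hr0 _
    have : ∫ ω, (Z r ω k) ^ p ∂(μ r) ≤ D k / r ^ ((((k : ℕ) : ℝ) + 1) * p) := by
      rw [le_div_iff₀ hrp]; linarith
    refine hset.trans (this.trans_eq ?_)
    rw [div_eq_mul_inv, ← Real.rpow_neg hr0.le, neg_mul]
  have hD0 : ∀ k : Fin J, k < j → 0 ≤ D k := by
    intro k hk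
    refine le_trans (integral_nonneg fun ω => Real.rpow_nonneg
      (mul_nonneg (by positivity) (hZ0 r ω k)) _) (hsup k hk r ⟨hr0, hr1⟩)
  -- per-k inequality
  have hbk : ∀ k ∈ filt,
      C * r ^ (jn + 1) * (M * PA + (∫ ω in A r, (Z r ω k) ^ p ∂(μ r)) * E) / PA ≤
        C * r ^ β + C * D k * (m r * r ^ γ) := by
    intro k hk
    have hk' : k < j := by simpa [hfilt] using hk
    have hI0 : 0 ≤ ∫ ω in A r, (Z r ω k) ^ p ∂(μ r) :=
      integral_nonneg fun ω => Real.rpow_nonneg (hZ0 r ω k) _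
    set I : ℝ := ∫ ω in A r, (Z r ω k) ^ p ∂(μ r) with hIdef
    have split : C * r ^ (jn + 1) * (M * PA + I * E) / PA =
        C * (r ^ (jn + 1) * M) + C * (m r * (E * I)) := by
      rw [hPAeq]; field_simp
    rw [split]
    have t1 : r ^ (jn + 1) * M = r ^ β := by
      rw [hMdef, ← Real.rpow_natCast r (jn + 1), ← Real.rpow_add hr0]
      congr 1
      rw [hβdef, hjR]; push_cast; ring
    have t2 : m r * (E * I) ≤ D k * (m r * r ^ γ) := by
      have hkj : ((k : ℕ) : ℝ) + 1 ≤ jR := by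
        rw [hjR, hjn]
        have : (k : ℕ) + 1 ≤ (j : ℕ) := hk'
        exact_mod_cast this
      have hEI : E * I ≤ D k * r ^ γ := by
        calc E * I ≤ E * (D k * r ^ (-(((k : ℕ) : ℝ) + 1) * p)) :=
              mul_le_mul_of_nonneg_left (hIbd k hk') hE.le
          _ = D k * r ^ (α * (p - 1) + (-(((k : ℕ) : ℝ) + 1) * p)) := by
              rw [Real.rpow_add hr0, hEdef]; ring
          _ ≤ D k * r ^ γ := by
              refine mul_le_mul_of_nonneg_left ?_ (hD0 k hk')
              refine Real.rpow_le_rpow_of_exponent_ge hr0 hr1.le ?_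
              rw [hγdef]; nlinarith [hpm1]
      calc m r * (E * I) ≤ m r * (D k * r ^ γ) :=
            mul_le_mul_of_nonneg_left hEI hmr.le
        _ = D k * (m r * r ^ γ) := by ring
    calc C * (r ^ (jn + 1) * M) + C * (m r * (E * I))
        ≤ C * r ^ β + C * (D k * (m r * r ^ γ)) := by
          rw [t1]
          have := mul_le_mul_of_nonneg_left t2 hC.le
          linarith
      _ = C * r ^ β + C * D k * (m r * r ^ γ) := by ring
  -- put everything together
  have habs : ‖(∫ ω in A r, f1 ω ∂(μ r)) / PA - (∫ ω in A r, f2 ω ∂(μ r)) / PA‖ ≤ B r := by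
    rw [div_sub_div_same, Real.norm_eq_abs, abs_div, abs_of_pos hPApos]
    calc |(∫ ω in A r, f1 ω ∂(μ r)) - (∫ ω in A r, f2 ω ∂(μ r))| / PA
        ≤ (∫ ω in A r, h ω ∂(μ r)) / PA := by
          exact (div_le_div_iff_of_pos_right hPApos).mpr hnorm
      _ ≤ B r := by
          rw [hIh, Finset.sum_div]
          exact Finset.sum_le_sum hbk
  exact habs
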